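/- arXiv:1810.01143 — 3 statements merged into one kernel-verified Lean document; each statement's English description precedes it below -/
import Mathlib

section
/- Let f : ℝ → ℝ be C^{n+1} at a point x with f'(x) ≠ 0, and set v = 1/f'. Then for each n ≥ 1 there exists a polynomial Q_n in n−1 variables with integer coefficients and degree at most n, with Q_1 = 0, such that v^{(n)}(x) · (v(x))^{n-1} = - f^{(n+1)}(x) / (f'(x))^{n+1} + Q_n( f''(x)/(f'(x))², …, f^{(n)}(x)/(f'(x))^{n} ). -/
/-!
Write `u_k = f^{(k+1)} / (f')^{k+1}` and `v = 1 / f'`. Then `v' = -u_1` and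
`u_k' = f' (u_{k+1} - (k+1) u_1 u_k)`, so differentiating the identity
`v^{(n)} f' = (f')^n (-u_n + Q_n(u))` once more and dividing by `f'` gives the identity for
`n + 1`, with `Q_{n+1}` produced exactly by the recursion; each step raises the degree by at most
one. The identity may be differentiated at `x` because it holds on a neighbourhood of `x`, where
`f` is still `C^{n+1}` and `f' ≠ 0`.
-/

open MvPolynomial Filter Topology

section IteratedDeriv

variable {𝕜 F : Type*} [NontriviallyNormedField 𝕜] [NormedAddCommGroup F] [NormedSpace 𝕜 F]
  {f : 𝕜 → F} {x : 𝕜}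

theorem contDiffAt_iteratedDeriv {k : ℕ} :
    ∀ {j : ℕ} {f : 𝕜 → F}, ContDiffAt 𝕜 (k + j : ℕ) f x → ContDiffAt 𝕜 k (iteratedDeriv j f) x
  | 0, _, h => h
  | j + 1, f, h => by
    rw [iteratedDeriv_succ']
    exact contDiffAt_iteratedDeriv (h.derivWithin (by push_cast; rfl))

theorem hasDerivAt_iteratedDeriv {j : ℕ} (h : ContDiffAt 𝕜 (j + 1 : ℕ) f x) :
    HasDerivAt (iteratedDeriv j f) (iteratedDeriv (j + 1) f x) x := by
  rw [iteratedDeriv_succ]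
  exact ((contDiffAt_iteratedDeriv (k := 1) (by rwa [add_comm])).differentiableAt
    one_ne_zero).hasDerivAt

theorem hasDerivAt_deriv_of_contDiffAt_two (hf : ContDiffAt 𝕜 2 f x) :
    HasDerivAt (deriv f) (iteratedDeriv 2 f x) x := by
  simpa using hasDerivAt_iteratedDeriv (j := 1) hf

end IteratedDeriv

namespace MvPolynomial

theorem totalDegree_pderiv_le {σ R : Type*} [CommSemiring R] (i : σ) (p : MvPolynomial σ R) :
    (pderiv i p).totalDegree ≤ p.totalDegree - 1 := by
  classical
  conv_lhs => rw [p.as_sum, map_sum]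
  refine (totalDegree_finsetSum _ _).trans (Finset.sup_le fun s hs => ?_)
  rw [pderiv_monomial]
  by_cases h : s i = 0
  · simp [h]
  refine (totalDegree_monomial_le _ _).trans ?_
  have hsplit : s - Finsupp.single i 1 + Finsupp.single i 1 = s :=
    tsub_add_cancel_of_le (Finsupp.single_le_iff.mpr (Nat.one_le_iff_ne_zero.mpr h))
  have hdeg := congrArg Finsupp.degree hsplit
  rw [map_add, Finsupp.degree_single] at hdeg
  have hle : Finsupp.degree s ≤ p.totalDegree := le_totalDegree hs
  change Finsupp.degree (s - Finsupp.single i 1) ≤ _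
  omega

theorem totalDegree_C_mul_X_mul_X_le {σ R : Type*} [CommSemiring R] [Nontrivial R] (a : R)
    (i j : σ) : (C a * X i * X j : MvPolynomial σ R).totalDegree ≤ 2 :=
  calc (C a * X i * X j : MvPolynomial σ R).totalDegree
      ≤ (C a).totalDegree + (X i : MvPolynomial σ R).totalDegree
          + (X j : MvPolynomial σ R).totalDegree :=
        (totalDegree_mul _ _).trans (by gcongr; exact totalDegree_mul _ _)
    _ = 2 := by rw [totalDegree_C, totalDegree_X, totalDegree_X]

theorem hasDerivAt_aeval {σ R 𝕜 : Type*} [CommSemiring R] [NontriviallyNormedField 𝕜]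
    [Algebra R 𝕜] [Fintype σ] (p : MvPolynomial σ R) {u : σ → 𝕜 → 𝕜} {u' : σ → 𝕜} {x : 𝕜}
    (hu : ∀ i, HasDerivAt (u i) (u' i) x) :
    HasDerivAt (fun y => aeval (fun i => u i y) p)
      (∑ i, aeval (fun i => u i x) (pderiv i p) * u' i) x := by
  classical
  induction p using MvPolynomial.induction_on with
  | C a => simpa using hasDerivAt_const x (algebraMap R 𝕜 a)
  | add p q hp hq => simpa only [map_add, add_mul, Finset.sum_add_distrib] using hp.fun_add hq
  | mul_X p k hp =>
    simp only [map_mul, aeval_X, pderiv_mul, pderiv_X, map_add, add_mul, Finset.sum_add_distrib]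
    refine (hp.fun_mul (hu k)).congr_deriv ?_
    simp [Pi.single_apply, Finset.sum_mul, mul_right_comm]

end MvPolynomial

/-- `polyDeriv` mirrors `u_k' = f' (u_{k+1} - (k+2) u_0 u_k)`, see `hasDerivAt_scaledDeriv`. -/
noncomputable def polyDeriv {m : ℕ} (Q : MvPolynomial (Fin m) ℤ) : MvPolynomial (Fin (m + 1)) ℤ :=
  ∑ k : Fin m, rename Fin.castSucc (pderiv k Q) *
    (X k.succ - C ((k : ℤ) + 2) * X 0 * X k.castSucc)

/-- `recipDerivPoly m` is the paper's `Q_{m+1}`, its variable `k` standing for `u_{k+1}`. -/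
noncomputable def recipDerivPoly : (m : ℕ) → MvPolynomial (Fin m) ℤ
  | 0 => 0
  | m + 1 => C 2 * X 0 * X (Fin.last m) + C (m : ℤ) * X 0 * rename Fin.castSucc (recipDerivPoly m)
      + polyDeriv (recipDerivPoly m)

theorem totalDegree_polyDeriv_le {m d : ℕ} {Q : MvPolynomial (Fin m) ℤ}
    (hQ : Q.totalDegree ≤ d + 1) : (polyDeriv Q).totalDegree ≤ d + 2 := by
  refine (totalDegree_finsetSum _ _).trans (Finset.sup_le fun k _ => ?_)
  have hQk : (rename Fin.castSucc (pderiv k Q)).totalDegree ≤ d :=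
    (totalDegree_rename_le _ _).trans ((totalDegree_pderiv_le k Q).trans (by omega))
  have hX : (X k.succ - C ((k : ℤ) + 2) * X 0 * X k.castSucc :
      MvPolynomial (Fin (m + 1)) ℤ).totalDegree ≤ 2 :=
    (totalDegree_sub _ _).trans
      (max_le ((totalDegree_X _).trans_le one_le_two) (totalDegree_C_mul_X_mul_X_le _ _ _))
  exact (totalDegree_mul _ _).trans (add_le_add hQk hX)

theorem totalDegree_recipDerivPoly_le : ∀ m, (recipDerivPoly m).totalDegree ≤ m + 1
  | 0 => by simp [recipDerivPoly]
  | m + 1 => by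
    have ih := totalDegree_recipDerivPoly_le m
    have hrename : (C (m : ℤ) * X 0 * rename Fin.castSucc (recipDerivPoly m)).totalDegree
        ≤ m + 2 :=
      calc _ ≤ (C (m : ℤ)).totalDegree + (X 0 : MvPolynomial (Fin (m + 1)) ℤ).totalDegree
              + (rename Fin.castSucc (recipDerivPoly m)).totalDegree :=
            (totalDegree_mul _ _).trans (by gcongr; exact totalDegree_mul _ _)
        _ ≤ 0 + 1 + (m + 1) := by
            gcongr
            · exact (totalDegree_C _).le
            · exact (totalDegree_X _).le
            · exact (totalDegree_rename_le _ _).trans ih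
        _ = m + 2 := by ring
    refine (totalDegree_add _ _).trans (max_le ((totalDegree_add _ _).trans (max_le ?_ hrename))
      (totalDegree_polyDeriv_le ih))
    exact (totalDegree_C_mul_X_mul_X_le _ _ _).trans (by omega)

theorem aeval_polyDeriv {A : Type*} [CommRing A] {m : ℕ} (Q : MvPolynomial (Fin m) ℤ)
    (U : ℕ → A) :
    aeval (fun k : Fin (m + 1) => U k) (polyDeriv Q) =
      ∑ k : Fin m,
        aeval (fun k : Fin m => U k) (pderiv k Q) * (U (k + 1) - (k + 2) * U 0 * U k) := by
  simp [polyDeriv, aeval_rename, Function.comp_def]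

/-- `scaledDeriv f k` is the paper's `u_{k+1} = f^{(k+2)} / (f')^{k+2}`. -/
noncomputable def scaledDeriv (f : ℝ → ℝ) (k : ℕ) (y : ℝ) : ℝ :=
  iteratedDeriv (k + 2) f y / deriv f y ^ (k + 2)

noncomputable def recipDerivExpr (m : ℕ) (f : ℝ → ℝ) (y : ℝ) : ℝ :=
  -scaledDeriv f m y + aeval (fun k : Fin m => scaledDeriv f k y) (recipDerivPoly m)

section Derivatives

variable {f : ℝ → ℝ} {x : ℝ}

theorem hasDerivAt_scaledDeriv (k : ℕ) (hf : ContDiffAt ℝ (k + 3 : ℕ) f x)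
    (hf' : deriv f x ≠ 0) :
    HasDerivAt (scaledDeriv f k)
      (deriv f x * (scaledDeriv f (k + 1) x - (k + 2) * scaledDeriv f 0 x * scaledDeriv f k x))
      x := by
  have hnum := hasDerivAt_iteratedDeriv (j := k + 2) hf
  have hden :=
    (hasDerivAt_deriv_of_contDiffAt_two (hf.of_le (by norm_cast; omega))).fun_pow (k + 2)
  refine (hnum.div hden (pow_ne_zero _ hf')).congr_deriv ?_
  simp only [scaledDeriv]
  field_simp
  push_cast
  ring

theorem hasDerivAt_aeval_scaledDeriv {m : ℕ} (Q : MvPolynomial (Fin m) ℤ)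
    (hf : ContDiffAt ℝ (m + 2 : ℕ) f x) (hf' : deriv f x ≠ 0) :
    HasDerivAt (fun y => aeval (fun k : Fin m => scaledDeriv f k y) Q)
      (deriv f x * aeval (fun k : Fin (m + 1) => scaledDeriv f k x) (polyDeriv Q)) x := by
  refine (Q.hasDerivAt_aeval fun k =>
    hasDerivAt_scaledDeriv k (hf.of_le (by norm_cast; omega)) hf').congr_deriv ?_
  rw [aeval_polyDeriv Q (fun k => scaledDeriv f k x), Finset.mul_sum]
  exact Finset.sum_congr rfl fun k _ => by ring

theorem hasDerivAt_recipDerivExpr (m : ℕ) (hf : ContDiffAt ℝ (m + 3 : ℕ) f x)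
    (hf' : deriv f x ≠ 0) :
    HasDerivAt (recipDerivExpr m f)
      (deriv f x * (recipDerivExpr (m + 1) f x - m * scaledDeriv f 0 x * recipDerivExpr m f x))
      x := by
  refine ((hasDerivAt_scaledDeriv m hf hf').neg.add
    (hasDerivAt_aeval_scaledDeriv (recipDerivPoly m) (hf.of_le (by norm_cast; omega)) hf'))
    |>.congr_deriv ?_
  simp only [recipDerivExpr, recipDerivPoly, map_add, map_mul, map_intCast, aeval_X, aeval_rename,
    Function.comp_def, Fin.val_castSucc, Fin.val_last, Fin.val_zero, eq_intCast]
  push_cast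
  ring

end Derivatives

/-- The identity is multiplied through by `(f')^{m+1}` so that differentiating it produces no
factor `(f')^{m-1}`. -/
theorem iteratedDeriv_one_div_deriv_mul_deriv :
    ∀ (m : ℕ) {f : ℝ → ℝ} {x : ℝ}, ContDiffAt ℝ (m + 2 : ℕ) f x → deriv f x ≠ 0 →
      iteratedDeriv (m + 1) (fun y => 1 / deriv f y) x * deriv f x =
        deriv f x ^ (m + 1) * recipDerivExpr m f x
  | 0, f, x, hf, hf' => by
    have hv := (hasDerivAt_const x 1).fun_div (hasDerivAt_deriv_of_contDiffAt_two hf) hf'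
    simp only [zero_add, iteratedDeriv_one, hv.deriv, recipDerivExpr, scaledDeriv, map_zero,
      recipDerivPoly]
    field_simp
    ring
  | m + 1, f, x, hf, hf' => by
    set v : ℝ → ℝ := fun y => 1 / deriv f y
    have hf'' := hasDerivAt_deriv_of_contDiffAt_two (hf.of_le (by norm_cast; omega))
    have hv : ContDiffAt ℝ (m + 2 : ℕ) v x :=
      contDiffAt_const.div (hf.derivWithin (by norm_cast)) hf'
    have heq : (fun y => iteratedDeriv (m + 1) v y * deriv f y) =ᶠ[𝓝 x]
        fun y => deriv f y ^ (m + 1) * recipDerivExpr m f y :=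
      ((hf.eventually (ENat.natCast_ne_coe_top _)).and (hf''.continuousAt.eventually_ne hf')).mono
        fun y ⟨hy, hy'⟩ =>
          iteratedDeriv_one_div_deriv_mul_deriv m (hy.of_le (by norm_cast; omega)) hy'
    have hL := (hasDerivAt_iteratedDeriv (j := m + 1) hv).fun_mul hf''
    have hR := (hf''.fun_pow (m + 1)).fun_mul (hasDerivAt_recipDerivExpr m hf hf')
    have key := hL.unique (hR.congr_of_eventuallyEq heq)
    have ih := iteratedDeriv_one_div_deriv_mul_deriv m (hf.of_le (by norm_cast; omega)) hf'
    have hu0 : scaledDeriv f 0 x * deriv f x ^ 2 = iteratedDeriv 2 f x := by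
      simp only [scaledDeriv]
      field_simp
    push_cast [Nat.add_sub_cancel] at key
    linear_combination key - scaledDeriv f 0 x * deriv f x * ih
      + (iteratedDeriv (m + 1) v x - (m + 1) * deriv f x ^ m * recipDerivExpr m f x) * hu0

/-- If `f` has continuous derivatives up to order `n+1` at `x`, `f' x ≠ 0`, and
`v = 1 / f'`, then there is an integer polynomial `Q_n` in `n-1` variables of
total degree at most `n`, with `Q_1 = 0`, such that
`v^{(n)}(x) (v x)^{n-1} = - f^{(n+1)}(x)/(f'(x))^{n+1} + Q_n(f''/(f')², …, f^{(n)}/(f')ⁿ)`. -/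
theorem stmt_2 (n : ℕ) (hn : 1 ≤ n) (f : ℝ → ℝ) (x : ℝ)
    (hf : ContDiffAt ℝ (n + 1) f x) (hf' : deriv f x ≠ 0)
    (v : ℝ → ℝ) (hv : v = fun y => 1 / deriv f y) :
    ∃ Q : MvPolynomial (Fin (n - 1)) ℤ,
      Q.totalDegree ≤ n ∧ (n = 1 → Q = 0) ∧
      iteratedDeriv n v x * (v x) ^ (n - 1) =
        - iteratedDeriv (n + 1) f x / (deriv f x) ^ (n + 1) +
          MvPolynomial.aeval
            (fun k : Fin (n - 1) =>
              iteratedDeriv (k.1 + 2) f x / (deriv f x) ^ (k.1 + 2)) Q := by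
  subst hv
  obtain ⟨m, rfl⟩ : ∃ m, n = m + 1 := ⟨n - 1, by omega⟩
  refine ⟨recipDerivPoly m, totalDegree_recipDerivPoly_le m, ?_, ?_⟩
  · intro h
    obtain rfl : m = 0 := by omega
    rfl
  have h := iteratedDeriv_one_div_deriv_mul_deriv m (by exact_mod_cast hf) hf'
  rw [neg_div]
  change _ * (1 / deriv f x) ^ m = recipDerivExpr m f x
  rw [one_div, inv_pow, ← div_eq_mul_inv, div_eq_iff (pow_ne_zero _ hf')]
  refine mul_right_cancel₀ hf' ?_
  linear_combination h
end

section
/- Define polynomials Q_n in variables u_1,…,u_{n-1} with integer coefficients by Q_1 = 0, Q_2(u_1) = 2 u_1², and Q_{n+1}(u_1,…,u_n) = 2 u_1 u_n + (n-1) u_1 Q_n + Σ_{k=1}^{n-1} (∂Q_n/∂u_k)(u_{k+1} - (k+1) u_1 u_k). Then deg Q_n ≤ n for every n ≥ 1. -/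
open MvPolynomial

/-- The polynomials `Q_n` in the variables `u_1, …, u_{n-1}` (here the variable
`u_j` is `X (j-1)`): `Q 1 = 0`, `Q 2 = 2 u₁²`, and
`Q (n+1) = 2 u₁ uₙ + (n-1) u₁ Qₙ + ∑_{k=1}^{n-1} (∂Qₙ/∂u_k)(u_{k+1} - (k+1) u₁ u_k)`. -/
noncomputable def QPoly : ℕ → MvPolynomial ℕ ℤ
  | 0 => 0
  | 1 => 0
  | 2 => 2 * X 0 ^ 2
  | n + 3 =>
      2 * X 0 * X (n + 1) + ((n + 1 : ℕ) : MvPolynomial ℕ ℤ) * X 0 * QPoly (n + 2) +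
        ∑ k ∈ Finset.Icc 1 (n + 1),
          (pderiv (k - 1)) (QPoly (n + 2)) *
            (X k - ((k + 1 : ℕ) : MvPolynomial ℕ ℤ) * X 0 * X (k - 1))

lemma totalDegree_pderiv_le_aux (i : ℕ) (p : MvPolynomial ℕ ℤ) {d : ℕ}
    (h : p.totalDegree ≤ d + 1) : ((pderiv i) p).totalDegree ≤ d := by
  conv_lhs => rw [p.as_sum]
  rw [map_sum]
  apply totalDegree_finsetSum_le
  intro s hs
  rw [pderiv_monomial]
  by_cases h0 : s i = 0
  · simp [h0]
  · refine le_trans (totalDegree_monomial_le _ _) ?_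
    have hle : Finsupp.single i 1 ≤ s := by
      rw [Finsupp.single_le_iff]; omega
    have hs' : (s - Finsupp.single i 1) + Finsupp.single i 1 = s :=
      tsub_add_cancel_of_le hle
    have hsum : s.sum (fun _ e => e) ≤ d + 1 := le_trans (le_totalDegree hs) h
    have : (s - Finsupp.single i 1).sum (fun _ e => e) + 1 = s.sum (fun _ e => e) := by
      conv_rhs => rw [← hs']
      rw [Finsupp.sum_add_index' (fun _ => rfl) (fun _ _ _ => rfl)]
      simp [Finsupp.sum_single_index]
    show ((s - Finsupp.single i 1).sum fun _ e => e) ≤ d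
    omega

lemma totalDegree_natCast' (m : ℕ) :
    ((m : MvPolynomial ℕ ℤ)).totalDegree = 0 := by
  rw [← C_eq_coe_nat]
  exact totalDegree_C _

lemma deg_cast_mul_X (a j : ℕ) :
    (((a : ℕ) : MvPolynomial ℕ ℤ) * X j).totalDegree ≤ 1 := by
  refine le_trans (totalDegree_mul _ _) ?_
  rw [totalDegree_natCast', totalDegree_X]

/-- `deg Q_n ≤ n` for every `n ≥ 1`. -/
theorem stmt_3 : ∀ n : ℕ, 1 ≤ n → (QPoly n).totalDegree ≤ n := by
  have h2 : (2 : MvPolynomial ℕ ℤ).totalDegree = 0 := by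
    simpa using totalDegree_natCast' 2
  have key : ∀ n : ℕ, (QPoly (n + 2)).totalDegree ≤ n + 2 := by
    intro n
    induction n with
    | zero =>
        show (2 * X 0 ^ 2 : MvPolynomial ℕ ℤ).totalDegree ≤ 2
        refine le_trans (totalDegree_mul _ _) ?_
        rw [h2, zero_add]
        exact le_trans (totalDegree_pow _ _) (by rw [totalDegree_X])
    | succ m ih =>
        show (QPoly (m + 3)).totalDegree ≤ m + 3
        rw [show QPoly (m + 3) =
          2 * X 0 * X (m + 1) + ((m + 1 : ℕ) : MvPolynomial ℕ ℤ) * X 0 * QPoly (m + 2) +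
            ∑ k ∈ Finset.Icc 1 (m + 1),
              (pderiv (k - 1)) (QPoly (m + 2)) *
                (X k - ((k + 1 : ℕ) : MvPolynomial ℕ ℤ) * X 0 * X (k - 1)) from rfl]
        refine le_trans (totalDegree_add _ _) (max_le (le_trans (totalDegree_add _ _)
          (max_le ?_ ?_)) ?_)
        · refine le_trans (totalDegree_mul _ _) ?_
          refine le_trans (add_le_add (totalDegree_mul _ _) le_rfl) ?_
          rw [h2, totalDegree_X, totalDegree_X]
          omega
        · refine le_trans (totalDegree_mul _ _) ?_
          have := deg_cast_mul_X (m + 1) 0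
          omega
        · apply totalDegree_finsetSum_le
          intro k _
          refine le_trans (totalDegree_mul _ _) ?_
          have hp : ((pderiv (k - 1)) (QPoly (m + 2))).totalDegree ≤ m + 1 :=
            totalDegree_pderiv_le_aux _ _ ih
          have hq : (X k - ((k + 1 : ℕ) : MvPolynomial ℕ ℤ) * X 0 * X (k - 1) :
              MvPolynomial ℕ ℤ).totalDegree ≤ 2 := by
            refine le_trans (totalDegree_sub _ _) (max_le ?_ ?_)
            · rw [totalDegree_X]; omega
            · refine le_trans (totalDegree_mul _ _) ?_
              have := deg_cast_mul_X (k + 1) 0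
              rw [totalDegree_X]
              omega
          omega
  intro n hn
  match n, hn with
  | 1, _ => simp [QPoly]
  | (m + 2), _ => exact key m
end

section
/- Suppose f : (0,1) → ℝ is C¹ with f(x) → +∞ as x → 1 and f'(x) = 1/v(x) where v is C¹ on [0,1] (after the change of variable) with v(1) = 0 and v'(1) = 0. Then lim_{x→1} (ln |f'(x)|) / f(x) = 0. -/
/-!
Since `f' = 1 / v`, we have `log |f'| = -log v` and `(log v)' = v' / v = v' f'`. As `v' → 0` at `1`,
`(log v)' = o(f')`, and integrating this against `f → ∞` (a one-sided L'Hôpital rule) gives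
`log v = o(f)`.
-/

open Filter Set Topology Asymptotics

theorem abs_sub_le_mul_sub_of_abs_deriv_le {f g f' g' : ℝ → ℝ} {a b c : ℝ} (hab : a ≤ b)
    (hf : ∀ x ∈ Icc a b, HasDerivAt f (f' x) x) (hg : ∀ x ∈ Icc a b, HasDerivAt g (g' x) x)
    (hbound : ∀ x ∈ Icc a b, |g' x| ≤ c * f' x) :
    |g b - g a| ≤ c * (f b - f a) := by
  have hcont : ∀ {h h' : ℝ → ℝ}, (∀ x ∈ Icc a b, HasDerivAt h (h' x) x) →
      ContinuousOn h (Icc a b) := fun hh x hx => (hh x hx).continuousAt.continuousWithinAt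
  refine image_norm_le_of_norm_deriv_right_le_deriv_boundary' (f := fun x => g x - g a)
    (B := fun x => c * (f x - f a)) (hcont fun x hx => (hg x hx).sub_const (g a))
    (fun x hx => ((hg x (Ico_subset_Icc_self hx)).sub_const (g a)).hasDerivWithinAt)
    (by simp) (hcont fun x hx => ((hf x hx).sub_const (f a)).const_mul c)
    (fun x hx => (((hf x (Ico_subset_Icc_self hx)).sub_const (f a)).const_mul c).hasDerivWithinAt)
    (fun x hx => hbound x (Ico_subset_Icc_self hx)) ⟨hab, le_rfl⟩

theorem isLittleO_nhdsLT_of_deriv_isLittleO {f g f' g' : ℝ → ℝ} {b : ℝ}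
    (hf : ∀ᶠ x in 𝓝[<] b, HasDerivAt f (f' x) x) (hg : ∀ᶠ x in 𝓝[<] b, HasDerivAt g (g' x) x)
    (hf'_nonneg : ∀ᶠ x in 𝓝[<] b, 0 ≤ f' x) (hgf : g' =o[𝓝[<] b] f')
    (hftop : Tendsto f (𝓝[<] b) atTop) : g =o[𝓝[<] b] f := by
  rw [isLittleO_iff]
  intro ε hε
  obtain ⟨a, hab : a < b, hIoo⟩ := mem_nhdsLT_iff_exists_Ioo_subset.1
    (hf.and (hg.and (hf'_nonneg.and (isLittleO_iff.1 hgf (half_pos hε)))))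
  obtain ⟨c, hac, hcb⟩ := exists_between hab
  set K := |g c| + ε / 2 * |f c| with hK_def
  filter_upwards [Ioo_mem_nhdsLT hcb, hftop.eventually_ge_atTop (2 * K / ε)] with x hx hfx
  have hIcc : Icc c x ⊆ Ioo a b := Icc_subset_Ioo hac hx.2
  have hgx : |g x - g c| ≤ ε / 2 * (f x - f c) :=
    abs_sub_le_mul_sub_of_abs_deriv_le hx.1.le (fun y hy => (hIoo (hIcc hy)).1)
      (fun y hy => (hIoo (hIcc hy)).2.1) fun y hy => by
        obtain ⟨-, -, hf'y, hgy⟩ := hIoo (hIcc hy)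
        simpa only [Real.norm_eq_abs, abs_of_nonneg hf'y] using hgy
  have hfx_nonneg : 0 ≤ f x := (div_nonneg (by positivity) hε.le).trans hfx
  have hKf : 2 * K ≤ f x * ε := (div_le_iff₀ hε).1 hfx
  rw [Real.norm_eq_abs, Real.norm_eq_abs, abs_of_nonneg hfx_nonneg]
  calc |g x| ≤ |g c| + ε / 2 * (f x - f c) := by linarith [abs_sub_abs_le_abs_sub (g x) (g c)]
    _ ≤ K + ε / 2 * f x := by
      have := mul_le_mul_of_nonneg_left (neg_le_abs (f c)) (half_pos hε).le
      linarith
    _ ≤ ε * f x := by linarith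

theorem stmt_15_general (f v : ℝ → ℝ)
    (hftop : Tendsto f (nhdsWithin 1 (Iio 1)) atTop)
    (hv : ContDiff ℝ 1 v) (hv'1 : deriv v 1 = 0)
    (hvpos : ∀ x ∈ Ioo (0 : ℝ) 1, 0 < v x)
    (hfv : ∀ x ∈ Ioo (0 : ℝ) 1, deriv f x = 1 / v x) :
    Tendsto (fun x => Real.log |deriv f x| / f x) (nhdsWithin 1 (Iio 1)) (nhds 0) := by
  have hIoo : ∀ᶠ x in 𝓝[<] (1 : ℝ), x ∈ Ioo 0 1 := Ioo_mem_nhdsLT zero_lt_one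
  have hv' : Tendsto (deriv v) (𝓝[<] 1) (𝓝 0) :=
    hv'1 ▸ (hv.continuous_deriv le_rfl).continuousAt.tendsto.mono_left nhdsWithin_le_nhds
  have hlog : (fun x => Real.log (v x)) =o[𝓝[<] 1] f := by
    refine isLittleO_nhdsLT_of_deriv_isLittleO (f' := fun x => 1 / v x)
      (g' := fun x => deriv v x / v x) ?_ ?_ ?_ ?_ hftop
    · filter_upwards [hIoo] with x hx
      have hfx : deriv f x ≠ 0 := by rw [hfv x hx]; exact (one_div_pos.2 (hvpos x hx)).ne'
      exact hfv x hx ▸ (differentiableAt_of_deriv_ne_zero hfx).hasDerivAt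
    · filter_upwards [hIoo] with x hx
      exact ((hv.differentiable one_ne_zero x).hasDerivAt).log (hvpos x hx).ne'
    · filter_upwards [hIoo] with x hx
      exact (one_div_pos.2 (hvpos x hx)).le
    · exact (((isLittleO_one_iff ℝ).2 hv').mul_isBigO
        (isBigO_refl (fun x => 1 / v x) _)).congr (fun x => mul_one_div _ _) (fun x => one_mul _)
  refine hlog.neg_left.tendsto_div_nhds_zero.congr' ?_
  filter_upwards [hIoo] with x hx
  rw [hfv x hx, abs_of_pos (one_div_pos.2 (hvpos x hx)), one_div, Real.log_inv]

/-- Suppose `f : (0,1) → ℝ` is differentiable with `f x → +∞` as `x → 1⁻`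
and `f' = 1 / v` on `(0,1)`, where `v` is C¹ with `v 1 = 0`, `v' 1 = 0`, and
`v > 0` on `(0,1)`. Then `ln |f' x| / f x → 0` as `x → 1⁻`. -/
theorem stmt_15 (f v : ℝ → ℝ)
    (hfd : DifferentiableOn ℝ f (Ioo 0 1))
    (hftop : Tendsto f (nhdsWithin 1 (Iio 1)) atTop)
    (hv : ContDiff ℝ 1 v) (hv1 : v 1 = 0) (hv'1 : deriv v 1 = 0)
    (hvpos : ∀ x ∈ Ioo (0 : ℝ) 1, 0 < v x)
    (hfv : ∀ x ∈ Ioo (0 : ℝ) 1, deriv f x = 1 / v x) :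
    Tendsto (fun x => Real.log |deriv f x| / f x) (nhdsWithin 1 (Iio 1)) (nhds 0) :=
  stmt_15_general f v hftop hv hv'1 hvpos hfv
end
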